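/- arXiv:2205.05257 — 3 statements merged into one kernel-verified Lean document; each statement's English description precedes it below -/
import Mathlib

section
/- Johansson's de-Poissonisation lemma: let (q_n)_{n≥0} be a sequence with 0 ≤ q_n ≤ 1 and q_n ≥ q_{n+1} for all n, and define φ(ξ) = e^{-ξ} Σ_{n=0}^∞ q_n ξ^n/n!. For each d > 0, setting μ_n^{(d)} = n + (2√(d+1)+1)√(n log n) and ν_n^{(d)} = n − (2√(d+1)+1)√(n log n), there exist a constant C > 0 and n_0 such that for all n ≥ n_0: φ(μ_n^{(d)}) − C n^{−d} ≤ q_n ≤ φ(ν_n^{(d)}) + C n^{−d}. -/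
/-!
Write `P_ξ(S) = poissonize (S.indicator 1) ξ`: the probability that a Poisson variable of mean `ξ`
lies in `S`. As `q` is antitone with values in `[0, 1]`, `φ(ξ) - q n ≤ P_ξ(k < n)` and
`q n - φ(ξ) ≤ P_ξ(k > n)`. At `ξ = n ± s` with `s = c √(n log n)` and `c = 2 √(d + 1) + 1`,
the Chernoff bound with parameter `θ = s / (2n)` makes both tails at most
`exp (-(17/64) s² / n) = n ^ (-(17/64) c²)`, and `(17/64) c² ≥ d`.
-/
/-- The Poissonization of a sequence `q`. -/
noncomputable def poissonize (q : ℕ → ℝ) (ξ : ℝ) : ℝ :=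
  Real.exp (-ξ) * ∑' n : ℕ, q n * ξ ^ n / (Nat.factorial n : ℝ)

open Real Set Filter

lemma Real.hasSum_pow_div_factorial (x : ℝ) : HasSum (fun n => x ^ n / n.factorial) (exp x) := by
  rw [exp_eq_exp_ℝ]
  exact NormedSpace.expSeries_div_hasSum_exp x

lemma Real.exp_le_one_add_add_three_quarters_mul_sq {x : ℝ} (hx : |x| ≤ 1) :
    exp x ≤ 1 + x + 3 / 4 * x ^ 2 := by
  have hbound := (abs_le.1 (exp_bound hx (n := 3) (by norm_num))).2
  have hcube : |x| ^ 3 ≤ x ^ 2 := by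
    rw [← sq_abs x, pow_succ]
    exact mul_le_of_le_one_right (by positivity) hx
  norm_num [Finset.sum_range_succ, Nat.factorial] at hbound
  linarith [sq_nonneg x]

lemma Real.exp_neg_mul_log_le_rpow_neg {x a d : ℝ} (hx : 1 ≤ x) (hda : d ≤ a) :
    exp (-(a * log x)) ≤ x ^ (-d) := by
  rw [rpow_def_of_pos (by linarith)]
  exact exp_le_exp.2 (by nlinarith [log_nonneg hx])

lemma eventually_mul_sqrt_mul_log_le (c : ℝ) : ∀ᶠ x : ℝ in atTop, c * √(x * log x) ≤ x / 4 := by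
  have hε : (0 : ℝ) < 1 / (16 * c ^ 2 + 1) := by positivity
  filter_upwards [isLittleO_log_id_atTop.bound hε, eventually_ge_atTop 1] with x hlog hx
  rw [norm_of_nonneg (log_nonneg hx), id, norm_of_nonneg (by linarith)] at hlog
  have hclog : c ^ 2 * log x ≤ x / 16 := by
    calc c ^ 2 * log x ≤ c ^ 2 * (1 / (16 * c ^ 2 + 1) * x) := by gcongr
      _ ≤ x / 16 := by
        rw [← mul_assoc, mul_one_div, div_mul_eq_mul_div,
          div_le_div_iff₀ (by positivity) (by norm_num)]
        nlinarith [sq_nonneg c]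
  calc c * √(x * log x) ≤ |c| * √(x * log x) := by gcongr; exact le_abs_self c
    _ = √(c ^ 2 * (x * log x)) := by rw [sqrt_mul (sq_nonneg c), sqrt_sq_eq_abs]
    _ ≤ √((x / 4) ^ 2) := sqrt_le_sqrt (by nlinarith)
    _ = x / 4 := sqrt_sq (by linarith)

lemma summable_mul_pow_div_factorial {r : ℕ → ℝ} {B : ℝ} (hr : ∀ k, |r k| ≤ B) (ξ : ℝ) :
    Summable fun k => r k * ξ ^ k / (Nat.factorial k : ℝ) := by
  refine Summable.of_norm_bounded ((summable_pow_div_factorial |ξ|).mul_left B) fun k => ?_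
  rw [norm_eq_abs, abs_div, abs_mul, abs_pow, Nat.abs_cast, mul_div_assoc]
  exact mul_le_mul_of_nonneg_right (hr k) (by positivity)

lemma abs_indicator_one_le {α : Type*} (S : Set α) (a : α) : |S.indicator (1 : α → ℝ) a| ≤ 1 := by
  by_cases ha : a ∈ S <;> simp [ha]

section Poissonize

variable {r r' : ℕ → ℝ} {B B' : ℝ}

lemma poissonize_const (c ξ : ℝ) : poissonize (fun _ => c) ξ = c := by
  simp only [poissonize, mul_div_assoc, tsum_mul_left, (hasSum_pow_div_factorial ξ).tsum_eq]
  rw [mul_left_comm, ← exp_add, neg_add_cancel, exp_zero, mul_one]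

lemma poissonize_sub (hr : ∀ k, |r k| ≤ B) (hr' : ∀ k, |r' k| ≤ B') (ξ : ℝ) :
    poissonize (fun k => r k - r' k) ξ = poissonize r ξ - poissonize r' ξ := by
  simp only [poissonize, ← mul_sub,
    ← (summable_mul_pow_div_factorial hr ξ).tsum_sub (summable_mul_pow_div_factorial hr' ξ),
    sub_mul, sub_div]

lemma poissonize_mono (hr : ∀ k, |r k| ≤ B) (hr' : ∀ k, |r' k| ≤ B') (hrr' : r ≤ r') {ξ : ℝ}
    (hξ : 0 ≤ ξ) : poissonize r ξ ≤ poissonize r' ξ := by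
  refine mul_le_mul_of_nonneg_left ?_ (exp_nonneg _)
  refine Summable.tsum_le_tsum (fun k => ?_) (summable_mul_pow_div_factorial hr ξ)
    (summable_mul_pow_div_factorial hr' ξ)
  gcongr
  exact hrr' k

end Poissonize

-- Chernoff: on `S` the indicator is at most the weight `exp (θ (k - m))`.
lemma poissonize_indicator_le_exp {ξ θ m : ℝ} (hξ : 0 ≤ ξ) {S : Set ℕ}
    (hS : ∀ k ∈ S, θ * m ≤ θ * k) :
    poissonize (S.indicator 1) ξ ≤ exp (ξ * (exp θ - 1) - θ * m) := by
  have hterm : ∀ k, S.indicator 1 k * ξ ^ k / (Nat.factorial k : ℝ) ≤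
      exp (-(θ * m)) * ((ξ * exp θ) ^ k / (Nat.factorial k : ℝ)) := by
    intro k
    by_cases hk : k ∈ S
    · have hweight : 1 ≤ exp (-(θ * m)) * exp θ ^ k := by
        rw [← exp_nat_mul, ← exp_add]
        exact one_le_exp (by linarith [hS k hk])
      rw [indicator_of_mem hk, Pi.one_apply, one_mul, mul_pow, ← one_mul (ξ ^ k / _)]
      calc 1 * (ξ ^ k / (Nat.factorial k : ℝ))
          ≤ exp (-(θ * m)) * exp θ ^ k * (ξ ^ k / (Nat.factorial k : ℝ)) := by gcongr
        _ = _ := by ring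
    · rw [indicator_of_notMem hk, zero_mul, zero_div]
      positivity
  have hsum : ∑' k, S.indicator 1 k * ξ ^ k / (Nat.factorial k : ℝ) ≤
      exp (-(θ * m)) * exp (ξ * exp θ) := by
    rw [← (hasSum_pow_div_factorial (ξ * exp θ)).tsum_eq, ← tsum_mul_left]
    refine Summable.tsum_le_tsum hterm ?_ ((summable_pow_div_factorial _).mul_left _)
    exact summable_mul_pow_div_factorial (abs_indicator_one_le S) ξ
  calc poissonize (S.indicator 1) ξ ≤ exp (-ξ) * (exp (-(θ * m)) * exp (ξ * exp θ)) :=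
        mul_le_mul_of_nonneg_left hsum (exp_nonneg _)
    _ = exp (ξ * (exp θ - 1) - θ * m) := by
        rw [← exp_add, ← exp_add]
        ring_nf

section Antitone

variable {q : ℕ → ℝ}

lemma poissonize_sub_le_poissonize_indicator_Iio (h0 : ∀ n, 0 ≤ q n) (h1 : ∀ n, q n ≤ 1)
    (hq : Antitone q) {ξ : ℝ} (hξ : 0 ≤ ξ) (n : ℕ) :
    poissonize q ξ - q n ≤ poissonize ((Iio n).indicator 1) ξ := by
  have hqB : ∀ k, |q k| ≤ 1 := fun k => abs_le.2 ⟨by linarith [h0 k], h1 k⟩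
  rw [← poissonize_const (q n) ξ, ← poissonize_sub hqB (fun _ => hqB n)]
  refine poissonize_mono (B := 1) (fun k => abs_sub_le_iff.2 ⟨?_, ?_⟩) (abs_indicator_one_le _)
    (fun k => ?_) hξ
  · linarith [h0 n, h1 k]
  · linarith [h0 k, h1 n]
  by_cases hk : k < n
  · simp only [indicator_of_mem (mem_Iio.2 hk), Pi.one_apply]
    linarith [h0 n, h1 k]
  · simp only [indicator_of_notMem (fun h => hk (mem_Iio.1 h)), sub_nonpos]
    exact hq (not_lt.1 hk)

lemma sub_poissonize_le_poissonize_indicator_Ioi (h0 : ∀ n, 0 ≤ q n) (h1 : ∀ n, q n ≤ 1)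
    (hq : Antitone q) {ξ : ℝ} (hξ : 0 ≤ ξ) (n : ℕ) :
    q n - poissonize q ξ ≤ poissonize ((Ioi n).indicator 1) ξ := by
  have hqB : ∀ k, |q k| ≤ 1 := fun k => abs_le.2 ⟨by linarith [h0 k], h1 k⟩
  rw [← poissonize_const (q n) ξ, ← poissonize_sub (fun _ => hqB n) hqB]
  refine poissonize_mono (B := 1) (fun k => abs_sub_le_iff.2 ⟨?_, ?_⟩) (abs_indicator_one_le _)
    (fun k => ?_) hξ
  · linarith [h0 k, h1 n]
  · linarith [h0 n, h1 k]
  by_cases hk : n < k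
  · simp only [indicator_of_mem (mem_Ioi.2 hk), Pi.one_apply]
    linarith [h0 k, h1 n]
  · simp only [indicator_of_notMem (fun h => hk (mem_Ioi.1 h)), sub_nonpos]
    exact hq (not_lt.1 hk)

end Antitone

lemma poissonize_indicator_Iio_add_le {n : ℕ} (hn : 0 < n) {s : ℝ} (hs : 0 ≤ s) (hsn : s ≤ n / 4) :
    poissonize ((Iio n).indicator 1) (n + s) ≤ exp (-(17 / 64) * (s ^ 2 / n)) := by
  have hnR : (0 : ℝ) < n := by exact_mod_cast hn
  set θ := s / (2 * n) with hθ
  have hθ0 : 0 ≤ θ := by positivity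
  have hθ1 : |-θ| ≤ 1 := by
    rw [abs_neg, abs_of_nonneg hθ0, hθ, div_le_one (by positivity)]
    linarith
  refine (poissonize_indicator_le_exp (θ := -θ) (m := n) (by positivity) fun k hk => ?_).trans
    (exp_le_exp.2 ?_)
  · have : (k : ℝ) ≤ n := by exact_mod_cast (mem_Iio.1 hk).le
    nlinarith
  have hsθ : s * θ = s ^ 2 / n / 2 := by rw [hθ]; field_simp
  have hnθ : n * θ ^ 2 = s ^ 2 / n / 4 := by rw [hθ]; field_simp; ring
  have hsθ2 := mul_le_mul_of_nonneg_right hsn (sq_nonneg θ)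
  have := mul_le_mul_of_nonneg_left
    (by linarith [exp_le_one_add_add_three_quarters_mul_sq hθ1] :
      exp (-θ) - 1 ≤ -θ + 3 / 4 * (-θ) ^ 2)
    (by positivity : (0 : ℝ) ≤ n + s)
  linarith

lemma poissonize_indicator_Ioi_sub_le {n : ℕ} (hn : 0 < n) {s : ℝ} (hs : 0 ≤ s) (hsn : s ≤ n) :
    poissonize ((Ioi n).indicator 1) (n - s) ≤ exp (-(5 / 16) * (s ^ 2 / n)) := by
  have hnR : (0 : ℝ) < n := by exact_mod_cast hn
  set θ := s / (2 * n) with hθ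
  have hθ0 : 0 ≤ θ := by positivity
  have hθ1 : |θ| ≤ 1 := by
    rw [abs_of_nonneg hθ0, hθ, div_le_one (by positivity)]
    linarith
  refine (poissonize_indicator_le_exp (θ := θ) (m := n + 1) (by linarith) fun k hk => ?_).trans
    (exp_le_exp.2 ?_)
  · have : (n : ℝ) + 1 ≤ k := by exact_mod_cast mem_Ioi.1 hk
    nlinarith
  have hsθ : s * θ = s ^ 2 / n / 2 := by rw [hθ]; field_simp
  have hnθ : n * θ ^ 2 = s ^ 2 / n / 4 := by rw [hθ]; field_simp; ring
  have := mul_le_mul_of_nonneg_left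
    (by linarith [exp_le_one_add_add_three_quarters_mul_sq hθ1] : exp θ - 1 ≤ θ + 3 / 4 * θ ^ 2)
    (by linarith : (0 : ℝ) ≤ n - s)
  linarith [mul_nonneg hs (sq_nonneg θ)]

theorem dePoissonisation_general (q : ℕ → ℝ) (h0 : ∀ n, 0 ≤ q n) (h1 : ∀ n, q n ≤ 1)
    (hmono : ∀ n, q (n + 1) ≤ q n) (d : ℝ) :
    ∃ C > (0 : ℝ), ∃ n₀ : ℕ, ∀ n : ℕ, n₀ ≤ n →
      poissonize q ((n : ℝ) + (2 * Real.sqrt (d + 1) + 1) * Real.sqrt (n * Real.log n))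
          - C * (n : ℝ) ^ (-d) ≤ q n ∧
      q n ≤ poissonize q ((n : ℝ) - (2 * Real.sqrt (d + 1) + 1) * Real.sqrt (n * Real.log n))
          + C * (n : ℝ) ^ (-d) := by
  set c := 2 * √(d + 1) + 1
  have hdc : d ≤ 17 / 64 * c ^ 2 := by
    rcases le_or_gt 0 (d + 1) with hd | hd
    · nlinarith [sq_sqrt hd, sqrt_nonneg (d + 1)]
    · nlinarith [sqrt_nonneg (d + 1)]
  obtain ⟨n₀, hn₀⟩ := eventually_atTop.1 <|
    (tendsto_natCast_atTop_atTop.eventually (eventually_mul_sqrt_mul_log_le c)).and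
      (eventually_ge_atTop 1)
  refine ⟨1, one_pos, n₀, fun n hn => ?_⟩
  obtain ⟨hsn, hn1⟩ := hn₀ n hn
  have hnR : (1 : ℝ) ≤ n := by exact_mod_cast hn1
  set s := c * √(n * log n)
  have hs : 0 ≤ s := by positivity
  have hdecay : ∀ a, 17 / 64 ≤ a → exp (-a * (s ^ 2 / n)) ≤ (n : ℝ) ^ (-d) := by
    intro a ha
    have hs2 : s ^ 2 / n = c ^ 2 * log n := by
      rw [mul_pow, sq_sqrt (mul_nonneg (by linarith) (log_nonneg hnR))]
      field_simp
    rw [hs2, neg_mul, ← mul_assoc]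
    exact exp_neg_mul_log_le_rpow_neg hnR (hdc.trans (by gcongr))
  have hq : Antitone q := antitone_nat_of_succ_le hmono
  rw [one_mul]
  constructor
  · linarith [poissonize_sub_le_poissonize_indicator_Iio h0 h1 hq
      (by positivity : 0 ≤ (n : ℝ) + s) n,
      poissonize_indicator_Iio_add_le hn1 hs hsn, hdecay (17 / 64) le_rfl]
  · linarith [sub_poissonize_le_poissonize_indicator_Ioi h0 h1 hq
      (by linarith : 0 ≤ (n : ℝ) - s) n,
      poissonize_indicator_Ioi_sub_le hn1 hs (by linarith), hdecay (5 / 16) (by norm_num)]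

/-- Johansson's de-Poissonisation lemma. -/
theorem dePoissonisation (q : ℕ → ℝ) (h0 : ∀ n, 0 ≤ q n) (h1 : ∀ n, q n ≤ 1)
    (hmono : ∀ n, q (n + 1) ≤ q n) (d : ℝ) (hd : 0 < d) :
    ∃ C > (0 : ℝ), ∃ n₀ : ℕ, ∀ n : ℕ, n₀ ≤ n →
      poissonize q ((n : ℝ) + (2 * Real.sqrt (d + 1) + 1) * Real.sqrt (n * Real.log n))
          - C * (n : ℝ) ^ (-d) ≤ q n ∧
      q n ≤ poissonize q ((n : ℝ) - (2 * Real.sqrt (d + 1) + 1) * Real.sqrt (n * Real.log n))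
          + C * (n : ℝ) ^ (-d) :=
  dePoissonisation_general q h0 h1 hmono d
end

section
/- Suppose u_0 satisfies the sigma-Painlevé II equation (u_0'')^2 + 4u_0'((u_0')^2 − r u_0' + u_0) = 0 on an interval where u_0 is four times differentiable and u_0'' never vanishes. Define u_1(r) = −(2^{2/3}/10)·(u_0''(r) + (2u_0(r) + r^2/6) u_0'(r) + (r/3) u_0(r)). Then u_1 satisfies the linear ODE A_2(r) u_1'' + B_2(r) u_1' + C_2(r) u_1 = D_2(r), where A_2(r) = u_0''(r), B_2(r) = 2u_0(r) − 4r u_0'(r) + 6(u_0'(r))^2, C_2(r) = 2u_0'(r), and D_2(r) = −(1/(3·2^{1/3}))·(u_0'(r)(r^2 u_0'(r) + 6 u_0(r) u_0'(r) − 2r u_0(r) + 3 u_0''(r)) − 2(u_0(r))^2). -/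
/-!
Differentiating the sigma-form of Painlevé II gives `2 u₀'' (u₀''' + 2u₀ - 4r u₀' + 6u₀'²) = 0`,
so where `u₀''` does not vanish the third derivative is a polynomial in `r, u₀, u₀'`. Using it,
`u₁'` and `u₁''` involve no derivative of `u₀` beyond the second, and after eliminating `(u₀'')²`
by the equation itself the ODE for `u₁` becomes a polynomial identity.
-/

open Filter Topology Set

theorem IsOpen.eqOn_of_hasDerivAt {f g f' g' : ℝ → ℝ} {s : Set ℝ} (hs : IsOpen s)
    (hf : ∀ r ∈ s, HasDerivAt f (f' r) r) (hg : ∀ r ∈ s, HasDerivAt g (g' r) r)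
    (hfg : EqOn f g s) : EqOn f' g' s := fun r hr =>
  (hf r hr).unique ((hg r hr).congr_of_eventuallyEq (eventually_of_mem (hs.mem_nhds hr) hfg))

theorem two_rpow_two_thirds_div_six : (2 : ℝ) ^ ((2 : ℝ) / 3) / 6 = 1 / (3 * 2 ^ ((1 : ℝ) / 3)) := by
  have h : (2 : ℝ) ^ ((2 : ℝ) / 3) * 2 ^ ((1 : ℝ) / 3) = 2 := by
    rw [← Real.rpow_add two_pos]; norm_num
  field_simp
  linarith

section SigmaPainleveII

variable {u u' u'' u''' : ℝ → ℝ} {r : ℝ}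

theorem hasDerivAt_sigmaPII (hu : HasDerivAt u (u' r) r) (hu' : HasDerivAt u' (u'' r) r)
    (hu'' : HasDerivAt u'' (u''' r) r) :
    HasDerivAt (fun x => u'' x ^ 2 + 4 * u' x * (u' x ^ 2 - x * u' x + u x))
      (2 * u'' r * (u''' r + 2 * u r - 4 * r * u' r + 6 * u' r ^ 2)) r := by
  refine ((hu''.fun_pow 2).add ((hu'.const_mul 4).mul
    (((hu'.fun_pow 2).sub ((hasDerivAt_id' r).mul hu')).add hu))).congr_deriv ?_
  simp only [Pi.add_apply, Pi.sub_apply, Pi.mul_apply, Nat.cast_ofNat]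
  ring

theorem thirdDeriv_eq_of_sigmaPII (hu : HasDerivAt u (u' r) r) (hu' : HasDerivAt u' (u'' r) r)
    (hu'' : HasDerivAt u'' (u''' r) r)
    (heq : ∀ᶠ x in 𝓝 r, u'' x ^ 2 + 4 * u' x * (u' x ^ 2 - x * u' x + u x) = 0)
    (hne : u'' r ≠ 0) :
    u''' r = -2 * u r + 4 * r * u' r - 6 * u' r ^ 2 := by
  have h := (hasDerivAt_sigmaPII hu hu' hu'').unique ((hasDerivAt_const r 0).congr_of_eventuallyEq heq)
  have : u''' r + 2 * u r - 4 * r * u' r + 6 * u' r ^ 2 = 0 := by simpa [hne] using h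
  linarith

/-- The bracket in `u₁ = -(2^{2/3}/10) (u₀'' + (2u₀ + r²/6) u₀' + (r/3) u₀)`. -/
noncomputable def sigmaCorrection (u u' u'' : ℝ → ℝ) (x : ℝ) : ℝ :=
  u'' x + (2 * u x + x ^ 2 / 6) * u' x + x / 3 * u x

/-- The derivative of `sigmaCorrection` once `u'''` is eliminated by `thirdDeriv_eq_of_sigmaPII`. -/
noncomputable def sigmaCorrectionDeriv (u u' u'' : ℝ → ℝ) (x : ℝ) : ℝ :=
  -5 / 3 * u x + 14 / 3 * x * u' x - 4 * u' x ^ 2 + (2 * u x + x ^ 2 / 6) * u'' x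

theorem hasDerivAt_sigmaCorrection (hu : HasDerivAt u (u' r) r) (hu' : HasDerivAt u' (u'' r) r)
    (hu'' : HasDerivAt u'' (u''' r) r) (h3 : u''' r = -2 * u r + 4 * r * u' r - 6 * u' r ^ 2) :
    HasDerivAt (sigmaCorrection u u' u'') (sigmaCorrectionDeriv u u' u'' r) r := by
  refine ((hu''.add (((hu.const_mul 2).add ((hasDerivAt_pow 2 r).div_const 6)).mul hu')).add
    (((hasDerivAt_id' r).div_const 3).mul hu)).congr_deriv ?_
  simp only [sigmaCorrectionDeriv, h3, Pi.add_apply, Nat.cast_ofNat]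
  ring

theorem hasDerivAt_sigmaCorrectionDeriv (hu : HasDerivAt u (u' r) r)
    (hu' : HasDerivAt u' (u'' r) r) (hu'' : HasDerivAt u'' (u''' r) r) :
    HasDerivAt (sigmaCorrectionDeriv u u' u'')
      (3 * u' r + 5 * r * u'' r - 6 * u' r * u'' r + (2 * u r + r ^ 2 / 6) * u''' r) r := by
  refine ((((hu.const_mul (-5 / 3)).add (((hasDerivAt_id' r).const_mul (14 / 3)).mul hu')).sub
    ((hu'.fun_pow 2).const_mul 4)).add
    (((hu.const_mul 2).add ((hasDerivAt_pow 2 r).div_const 6)).mul hu'')).congr_deriv ?_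
  simp only [Pi.add_apply, Nat.cast_ofNat]
  ring

theorem sigmaCorrection_ode (h3 : u''' r = -2 * u r + 4 * r * u' r - 6 * u' r ^ 2)
    (heq : u'' r ^ 2 + 4 * u' r * (u' r ^ 2 - r * u' r + u r) = 0) :
    u'' r * (3 * u' r + 5 * r * u'' r - 6 * u' r * u'' r + (2 * u r + r ^ 2 / 6) * u''' r)
        + (2 * u r - 4 * r * u' r + 6 * u' r ^ 2) * sigmaCorrectionDeriv u u' u'' r
        + 2 * u' r * sigmaCorrection u u' u'' r
      = 5 / 3 * (u' r * (r ^ 2 * u' r + 6 * u r * u' r - 2 * r * u r + 3 * u'' r) - 2 * u r ^ 2) := by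
  rw [h3]
  unfold sigmaCorrection sigmaCorrectionDeriv
  linear_combination (5 * r - 6 * u' r) * heq

end SigmaPainleveII

theorem sigmaPII_correction_ODE_general (s : Set ℝ) (hs : IsOpen s)
    (u0 u0' u0'' u0''' u1 u1' u1'' : ℝ → ℝ)
    (hu0 : ∀ r ∈ s, HasDerivAt u0 (u0' r) r)
    (hu0' : ∀ r ∈ s, HasDerivAt u0' (u0'' r) r)
    (hu0'' : ∀ r ∈ s, HasDerivAt u0'' (u0''' r) r)
    (hu1 : ∀ r ∈ s, HasDerivAt u1 (u1' r) r)
    (hu1' : ∀ r ∈ s, HasDerivAt u1' (u1'' r) r)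
    (hne : ∀ r ∈ s, u0'' r ≠ 0)
    (heq : ∀ r ∈ s, (u0'' r) ^ 2 + 4 * u0' r * ((u0' r) ^ 2 - r * u0' r + u0 r) = 0)
    (hdef : ∀ r ∈ s, u1 r
      = -((2 : ℝ) ^ ((2 : ℝ) / 3) / 10)
          * (u0'' r + (2 * u0 r + r ^ 2 / 6) * u0' r + (r / 3) * u0 r)) :
    ∀ r ∈ s,
      u0'' r * u1'' r
        + (2 * u0 r - 4 * r * u0' r + 6 * (u0' r) ^ 2) * u1' r
        + 2 * u0' r * u1 r
      = -(1 / (3 * (2 : ℝ) ^ ((1 : ℝ) / 3)))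
          * (u0' r * (r ^ 2 * u0' r + 6 * u0 r * u0' r - 2 * r * u0 r + 3 * u0'' r)
              - 2 * (u0 r) ^ 2) := by
  set c : ℝ := -((2 : ℝ) ^ ((2 : ℝ) / 3) / 10)
  have h3 : ∀ r ∈ s, u0''' r = -2 * u0 r + 4 * r * u0' r - 6 * u0' r ^ 2 := fun r hr =>
    thirdDeriv_eq_of_sigmaPII (hu0 r hr) (hu0' r hr) (hu0'' r hr)
      (eventually_of_mem (hs.mem_nhds hr) heq) (hne r hr)
  have hu1'_eq : EqOn u1' (fun r => c * sigmaCorrectionDeriv u0 u0' u0'' r) s :=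
    hs.eqOn_of_hasDerivAt hu1 (fun r hr => ((hasDerivAt_sigmaCorrection (hu0 r hr) (hu0' r hr)
      (hu0'' r hr) (h3 r hr)).const_mul c)) hdef
  have hu1''_eq := hs.eqOn_of_hasDerivAt hu1' (fun r hr =>
    ((hasDerivAt_sigmaCorrectionDeriv (hu0 r hr) (hu0' r hr) (hu0'' r hr)).const_mul c)) hu1'_eq
  intro r hr
  have hu1_eq : u1 r = c * sigmaCorrection u0 u0' u0'' r := hdef r hr
  rw [hu1''_eq hr, hu1'_eq hr, hu1_eq, ← two_rpow_two_thirds_div_six]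
  linear_combination c * sigmaCorrection_ode (h3 r hr) (heq r hr)

/-- If `u₀` solves the sigma-Painlevé II equation on an open set where it is four times
differentiable and `u₀''` never vanishes, then
`u₁ = −(2^{2/3}/10)(u₀'' + (2u₀ + r²/6)u₀' + (r/3)u₀)` satisfies the linear ODE
`A₂ u₁'' + B₂ u₁' + C₂ u₁ = D₂`. -/
theorem sigmaPII_correction_ODE (s : Set ℝ) (hs : IsOpen s)
    (u0 u0' u0'' u0''' u0'''' u1 u1' u1'' : ℝ → ℝ)
    (hu0 : ∀ r ∈ s, HasDerivAt u0 (u0' r) r)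
    (hu0' : ∀ r ∈ s, HasDerivAt u0' (u0'' r) r)
    (hu0'' : ∀ r ∈ s, HasDerivAt u0'' (u0''' r) r)
    (hu0''' : ∀ r ∈ s, HasDerivAt u0''' (u0'''' r) r)
    (hu1 : ∀ r ∈ s, HasDerivAt u1 (u1' r) r)
    (hu1' : ∀ r ∈ s, HasDerivAt u1' (u1'' r) r)
    (hne : ∀ r ∈ s, u0'' r ≠ 0)
    (heq : ∀ r ∈ s, (u0'' r) ^ 2 + 4 * u0' r * ((u0' r) ^ 2 - r * u0' r + u0 r) = 0)
    (hdef : ∀ r ∈ s, u1 r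
      = -((2 : ℝ) ^ ((2 : ℝ) / 3) / 10)
          * (u0'' r + (2 * u0 r + r ^ 2 / 6) * u0' r + (r / 3) * u0 r)) :
    ∀ r ∈ s,
      u0'' r * u1'' r
        + (2 * u0 r - 4 * r * u0' r + 6 * (u0' r) ^ 2) * u1' r
        + 2 * u0' r * u1 r
      = -(1 / (3 * (2 : ℝ) ^ ((1 : ℝ) / 3)))
          * (u0' r * (r ^ 2 * u0' r + 6 * u0 r * u0' r - 2 * r * u0 r + 3 * u0'' r)
              - 2 * (u0 r) ^ 2) :=
  sigmaPII_correction_ODE_general s hs u0 u0' u0'' u0''' u1 u1' u1'' hu0 hu0' hu0'' hu1 hu1' hne heq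
    hdef
end

section
/- Suppose q_0 satisfies the Painlevé II equation q_0'' = r q_0 + 2 q_0^3, with sufficient decay of q_0 at +∞, and define u_0(t) := ∫_t^∞ q_0(r)^2 dr. Then u_0'(t) = −q_0(t)^2 and u_0 satisfies (u_0'')^2 + 4 u_0'((u_0')^2 − t u_0' + u_0) = 0. -/
open MeasureTheory Filter

lemma split_Ioi_aux {f : ℝ → ℝ} {a b : ℝ} (hab : a ≤ b) (h : IntegrableOn f (Set.Ioi a)) :
    ∫ r in Set.Ioi a, f r = (∫ r in a..b, f r) + ∫ r in Set.Ioi b, f r := by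
  rw [intervalIntegral.integral_of_le hab,
    ← MeasureTheory.setIntegral_union (Set.Ioc_disjoint_Ioi le_rfl) measurableSet_Ioi
      (h.mono_set Set.Ioc_subset_Ioi_self) (h.mono_set (fun x hx => lt_of_le_of_lt hab hx)),
    Set.Ioc_union_Ioi_eq_Ioi hab]


/-- If `q₀` solves Painlevé II `q'' = r q + 2q³` with super-polynomial decay at `+∞`,
then `u₀(t) = ∫_t^∞ q₀(r)² dr` satisfies `u₀'(t) = −q₀(t)²` and the sigma-Painlevé II
equation `(u₀'')² + 4u₀'((u₀')² − t u₀' + u₀) = 0`. -/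
theorem sigmaPII_from_PII (q0 q0' : ℝ → ℝ)
    (hd1 : ∀ r, HasDerivAt q0 (q0' r) r)
    (hd2 : ∀ r, HasDerivAt q0' (r * q0 r + 2 * (q0 r) ^ 3) r)
    (hint : ∀ t : ℝ, IntegrableOn (fun r => (q0 r) ^ 2) (Set.Ioi t))
    (hdecay : ∀ k : ℕ, Tendsto (fun r : ℝ => r ^ k * q0 r) atTop (nhds 0))
    (hdecay' : ∀ k : ℕ, Tendsto (fun r : ℝ => r ^ k * q0' r) atTop (nhds 0)) :
    ∀ t : ℝ,
      HasDerivAt (fun s => ∫ r in Set.Ioi s, (q0 r) ^ 2) (-(q0 t) ^ 2) t ∧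
      (-2 * q0 t * q0' t) ^ 2
        + 4 * (-(q0 t) ^ 2)
            * ((-(q0 t) ^ 2) ^ 2 - t * (-(q0 t) ^ 2) + ∫ r in Set.Ioi t, (q0 r) ^ 2)
        = 0 := by
  have cq : Continuous q0 := continuous_iff_continuousAt.mpr fun t => (hd1 t).continuousAt
  have cf : Continuous (fun r => (q0 r) ^ 2) := cq.pow 2
  set u : ℝ → ℝ := fun s => ∫ r in Set.Ioi s, (q0 r) ^ 2 with hu
  have key : ∀ s : ℝ, u s = u 0 - ∫ r in (0:ℝ)..s, (q0 r) ^ 2 := by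
    intro s
    rcases le_total (0:ℝ) s with h | h
    · rw [hu]; simp only
      rw [split_Ioi_aux h (hint 0)]; ring
    · rw [hu]; simp only
      rw [split_Ioi_aux h (hint s), intervalIntegral.integral_symm]; ring
  have hu' : ∀ t : ℝ, HasDerivAt u (-(q0 t) ^ 2) t := by
    intro t
    have h1 : HasDerivAt (fun s => ∫ r in (0:ℝ)..s, (q0 r) ^ 2) ((q0 t) ^ 2) t :=
      (cf.integral_hasStrictDerivAt 0 t).hasDerivAt
    have h2 := (hasDerivAt_const t (u 0)).sub h1
    rw [zero_sub] at h2
    exact h2.congr_of_eventuallyEq (Eventually.of_forall key)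
  -- the first integral F is identically zero
  set F : ℝ → ℝ := fun s => (q0' s) ^ 2 - s * (q0 s) ^ 2 - (q0 s) ^ 4 - u s with hF
  have hF' : ∀ t : ℝ, HasDerivAt F 0 t := by
    intro t
    have h := ((((hd2 t).fun_pow 2).fun_sub ((hasDerivAt_id t).fun_mul ((hd1 t).fun_pow 2))).fun_sub
      ((hd1 t).fun_pow 4)).fun_sub (hu' t)
    exact h.congr_deriv (by simp only [id_eq]; ring)
  have hconst : ∀ t : ℝ, F t = F 0 := fun t =>
    is_const_of_deriv_eq_zero (fun x => (hF' x).differentiableAt)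
      (fun x => (hF' x).deriv) t 0
  have hq0lim : Tendsto q0 atTop (nhds 0) := by simpa using hdecay 0
  have hq0'lim : Tendsto q0' atTop (nhds 0) := by simpa using hdecay' 0
  have hq0lim1 : Tendsto (fun r : ℝ => r * q0 r) atTop (nhds 0) := by simpa using hdecay 1
  have hulim : Tendsto u atTop (nhds 0) := by
    have h := MeasureTheory.intervalIntegral_tendsto_integral_Ioi 0 (hint 0) tendsto_id
    have h2 : Tendsto (fun s : ℝ => u 0 - ∫ r in (0:ℝ)..s, (q0 r) ^ 2) atTop
        (nhds (u 0 - u 0)) := tendsto_const_nhds.sub h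
    rw [sub_self] at h2
    exact h2.congr (fun s => (key s).symm)
  have hFlim : Tendsto F atTop (nhds 0) := by
    have h : Tendsto (fun s : ℝ => q0' s * q0' s - (s * q0 s) * q0 s
        - (q0 s * q0 s) * (q0 s * q0 s) - u s) atTop
        (nhds ((0:ℝ) * 0 - 0 * 0 - 0 * 0 * (0 * 0) - 0)) :=
      (((hq0'lim.mul hq0'lim).sub (hq0lim1.mul hq0lim)).sub
        ((hq0lim.mul hq0lim).mul (hq0lim.mul hq0lim))).sub hulim
    simpa using h.congr (fun s => by simp only [hF]; ring)
  have hF0 : F 0 = 0 := by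
    have : Tendsto F atTop (nhds (F 0)) := by
      have := hconst
      exact tendsto_const_nhds.congr (fun s => (hconst s).symm)
    exact tendsto_nhds_unique this hFlim
  intro t
  refine ⟨hu' t, ?_⟩
  have hFt : (q0' t) ^ 2 - t * (q0 t) ^ 2 - (q0 t) ^ 4 - u t = 0 := by
    have := hconst t; rw [hF0] at this; simpa [hF] using this
  show (-2 * q0 t * q0' t) ^ 2 + 4 * (-(q0 t) ^ 2) *
      ((-(q0 t) ^ 2) ^ 2 - t * (-(q0 t) ^ 2) + u t) = 0
  linear_combination 4 * (q0 t) ^ 2 * hFt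
end
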